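/- For every positive integer k and every complex number b with Re(b) > 0, ∑_{j=1}^{k} b^{-2j-1} · ζ(-2j+1) / ( (2j-1)! · (2k-2j)! ) = ∫₀¹ ( ∑_{j=1}^{k} ( b^{-2j-1} / ( (2j-1)! · (2k-2j)! ) ) · ( (-1)^{j} (2π)^{-2j} / j ) · (log u)^{2j} ) / (1-u)² du, where the integral is over u ∈ (0,1). -/

import Mathlib

/-!
Substituting `u = e⁻ᵗ` turns `∫₀¹ (log u)ⁿ / (1 - u)² du` into `(-1)ⁿ` times the Mellin transform
at `n + 1` of `e⁻ᵗ / (1 - e⁻ᵗ)² = ∑ m e^{-mt}`; integrating termwise gives the Dirichlet series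
`Γ(n + 1) ∑ m / m^{n+1} = n! ζ(n)`. For `n = 2j` the functional equation relates `ζ(2j)` to
`ζ(1 - 2j)`, and the identity holds term by term in `j`.
-/

open Real Complex Finset
open MeasureTheory

lemma self_div_pow_succ {K : Type*} [Field K] (x : K) {n : ℕ} (hn : n ≠ 0) :
    x / x ^ (n + 1) = 1 / x ^ n := by
  rcases eq_or_ne x 0 with rfl | hx
  · simp [hn]
  · rw [pow_succ, div_mul_cancel_right₀ hx, one_div]

lemma image_exp_neg_Ioi_zero : (fun t : ℝ ↦ Real.exp (-t)) '' Set.Ioi 0 = Set.Ioo 0 1 := by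
  rw [← Function.comp_def, Set.image_comp, Set.image_neg_Ioi, neg_zero, Real.image_exp_Iio,
    Real.exp_zero]

lemma integral_Ioo_zero_one_eq_integral_comp_exp_neg {E : Type*} [NormedAddCommGroup E]
    [NormedSpace ℝ E] (g : ℝ → E) :
    ∫ u in Set.Ioo 0 1, g u = ∫ t in Set.Ioi 0, Real.exp (-t) • g (Real.exp (-t)) := by
  rw [← image_exp_neg_Ioi_zero]
  simpa [abs_of_pos (Real.exp_pos _)] using integral_image_eq_integral_abs_deriv_smul
    measurableSet_Ioi (fun t _ ↦ (hasDerivAt_neg t).exp.hasDerivWithinAt)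
    (Real.exp_injective.comp neg_injective).injOn g

lemma hasSum_nat_mul_exp_neg_mul {t : ℝ} (ht : 0 < t) :
    HasSum (fun i : ℕ ↦ (i : ℂ) * Real.exp (-i * t))
      ((Real.exp (-t) / (1 - Real.exp (-t)) ^ 2 : ℝ) : ℂ) := by
  have hr : ‖Real.exp (-t)‖ < 1 := by
    rw [Real.norm_of_nonneg (Real.exp_nonneg _), Real.exp_lt_one_iff]
    linarith
  refine (hasSum_ofReal.2 (hasSum_coe_mul_geometric_of_norm_lt_one hr)).congr_fun fun i ↦ ?_
  simp [← Real.exp_nat_mul]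

lemma mellin_exp_neg_div_one_sub_exp_neg_sq {n : ℕ} (hn : 2 ≤ n) :
    mellin (fun t : ℝ ↦ ((Real.exp (-t) / (1 - Real.exp (-t)) ^ 2 : ℝ) : ℂ)) (n + 1)
      = n.factorial * riemannZeta n := by
  have hmellin := hasSum_mellin (a := fun i : ℕ ↦ (i : ℂ)) (p := fun i ↦ i) (s := n + 1)
    (fun i ↦ (Nat.eq_zero_or_pos i).imp (by simp +contextual) (by exact_mod_cast id))
    (by simp only [add_re, natCast_re, one_re]; positivity)
    (fun t ht ↦ hasSum_nat_mul_exp_neg_mul ht) ?_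
  · rw [← hmellin.tsum_eq, zeta_nat_eq_tsum_of_gt_one (by omega), ← tsum_mul_left]
    refine tsum_congr fun i ↦ ?_
    rw [Complex.Gamma_nat_eq_factorial, ofReal_natCast, ← Nat.cast_add_one, cpow_natCast,
      mul_div_assoc, self_div_pow_succ _ (by omega)]
  · simp only [add_re, natCast_re, one_re, Complex.norm_natCast]
    refine (Real.summable_one_div_nat_pow.2 (by omega : 1 < n)).congr fun i ↦ ?_
    rw [← Nat.cast_add_one, Real.rpow_natCast, self_div_pow_succ _ (by omega)]

lemma integral_log_pow_div_one_sub_sq {n : ℕ} (hn : 2 ≤ n) :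
    ∫ u in (0 : ℝ)..1, (Real.log u : ℂ) ^ n / (1 - u) ^ 2
      = (-1) ^ n * n.factorial * riemannZeta n := by
  rw [intervalIntegral.integral_of_le zero_le_one, integral_Ioc_eq_integral_Ioo,
    integral_Ioo_zero_one_eq_integral_comp_exp_neg, mul_assoc,
    ← mellin_exp_neg_div_one_sub_exp_neg_sq hn, mellin, ← integral_const_mul]
  refine setIntegral_congr_fun measurableSet_Ioi fun t _ ↦ ?_
  rw [Real.log_exp, add_sub_cancel_right, cpow_natCast]
  simp only [real_smul, smul_eq_mul]
  push_cast
  ring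

lemma intervalIntegrable_log_pow_div_one_sub_sq {n : ℕ} (hn : 2 ≤ n) :
    IntervalIntegrable (fun u : ℝ ↦ (Real.log u : ℂ) ^ n / (1 - u) ^ 2) volume 0 1 := by
  -- A non-integrable function has integral `0`, so the nonzero value forces integrability.
  refine intervalIntegral.intervalIntegrable_of_integral_ne_zero ?_
  rw [integral_log_pow_div_one_sub_sq hn]
  have hζ : riemannZeta n ≠ 0 := riemannZeta_ne_zero_of_one_lt_re (by simp; omega)
  have hfac : (n.factorial : ℂ) ≠ 0 := Nat.cast_ne_zero.2 n.factorial_ne_zero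
  exact mul_ne_zero (mul_ne_zero (pow_ne_zero _ (by norm_num)) hfac) hζ

lemma riemannZeta_one_sub_two_mul_nat {j : ℕ} (hj : j ≠ 0) :
    riemannZeta (1 - 2 * j) =
      (-1) ^ j * (2 * π) ^ (-(2 * j : ℤ)) / j * ((2 * j).factorial * riemannZeta (2 * j)) := by
  have hs : ∀ m : ℕ, (2 * j : ℂ) ≠ -m := fun m h ↦ by
    have := congrArg re h
    simp only [mul_re, re_ofNat, natCast_re, im_ofNat, natCast_im, mul_zero, sub_zero,
      neg_re] at this
    have : (2 * j : ℤ) = -m := by exact_mod_cast this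
    omega
  have hs' : (2 * j : ℂ) ≠ 1 := by exact_mod_cast (by omega : 2 * j ≠ 1)
  have hGamma : Complex.Gamma (2 * j) = (2 * j - 1).factorial := by
    rw [← Complex.Gamma_nat_eq_factorial, Nat.cast_sub (by omega)]
    push_cast
    ring_nf
  have hcos : Complex.cos (π * (2 * j) / 2) = (-1) ^ j := by
    rw [show (π : ℂ) * (2 * j) / 2 = ((j * π : ℝ) : ℂ) by push_cast; ring, ← ofReal_cos,
      Real.cos_nat_mul_pi]
    push_cast
    rfl
  have hpow : (2 * π : ℂ) ^ (-(2 * j : ℂ)) = (2 * π) ^ (-(2 * j : ℤ)) := by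
    rw [← cpow_intCast]
    push_cast
    rfl
  have hfac : ((2 * j).factorial : ℂ) = 2 * j * (2 * j - 1).factorial := by
    rw [← Nat.mul_factorial_pred (by omega)]
    push_cast
    rfl
  have hj' : (j : ℂ) ≠ 0 := Nat.cast_ne_zero.2 hj
  rw [riemannZeta_one_sub hs hs', hGamma, hcos, hpow, hfac]
  field_simp

theorem sum_zeta_neg_odd_integral_general (k : ℕ) (b : ℂ) :
    ∑ j ∈ Finset.Icc 1 k,
        b ^ (-(2 * j : ℤ) - 1) * riemannZeta (-(2 * (j : ℂ)) + 1) /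
          ((Nat.factorial (2 * j - 1) : ℂ) * (Nat.factorial (2 * k - 2 * j) : ℂ)) =
      ∫ u in (0:ℝ)..1,
        (∑ j ∈ Finset.Icc 1 k,
            (b ^ (-(2 * j : ℤ) - 1) /
                ((Nat.factorial (2 * j - 1) : ℂ) * (Nat.factorial (2 * k - 2 * j) : ℂ))) *
              ((-1 : ℂ) ^ j * (2 * (Real.pi : ℂ)) ^ (-(2 * j : ℤ)) / (j : ℂ)) *
              ((Real.log u : ℂ)) ^ (2 * j)) /
          (1 - (u : ℂ)) ^ 2 := by
  simp only [Finset.sum_div, mul_div_assoc]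
  rw [intervalIntegral.integral_finsetSum fun j hj ↦
    (intervalIntegrable_log_pow_div_one_sub_sq (by grind)).const_mul _]
  refine sum_congr rfl fun j hj ↦ ?_
  have hj0 : j ≠ 0 := by grind
  rw [intervalIntegral.integral_const_mul, integral_log_pow_div_one_sub_sq (by omega),
    (even_two_mul j).neg_one_pow, neg_add_eq_sub, riemannZeta_one_sub_two_mul_nat hj0]
  push_cast
  ring

/-- For every positive integer `k` and complex `b` with `Re b > 0`,
`∑_{j=1}^{k} b^{-2j-1} ζ(-2j+1)/((2j-1)!(2k-2j)!)
  = ∫₀¹ (∑_{j=1}^{k} (b^{-2j-1}/((2j-1)!(2k-2j)!)) ((-1)^j (2π)^{-2j}/j) (log u)^{2j}) / (1-u)² du`. -/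
theorem sum_zeta_neg_odd_integral (k : ℕ) (hk : 0 < k) (b : ℂ) (hb : 0 < b.re) :
    ∑ j ∈ Finset.Icc 1 k,
        b ^ (-(2 * j : ℤ) - 1) * riemannZeta (-(2 * (j : ℂ)) + 1) /
          ((Nat.factorial (2 * j - 1) : ℂ) * (Nat.factorial (2 * k - 2 * j) : ℂ)) =
      ∫ u in (0:ℝ)..1,
        (∑ j ∈ Finset.Icc 1 k,
            (b ^ (-(2 * j : ℤ) - 1) /
                ((Nat.factorial (2 * j - 1) : ℂ) * (Nat.factorial (2 * k - 2 * j) : ℂ))) *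
              ((-1 : ℂ) ^ j * (2 * (Real.pi : ℂ)) ^ (-(2 * j : ℤ)) / (j : ℂ)) *
              ((Real.log u : ℂ)) ^ (2 * j)) /
          (1 - (u : ℂ)) ^ 2 :=
  sum_zeta_neg_odd_integral_general k b
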